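/- Let 0 < 1/n ≪ α, c ≪ ξ ≪ η < 1 and let G be an oriented graph on n vertices with δ⁰(G) ≥ (1/2 - c)n. For every partition {A, B, C} of V(G) with |A| ≥ ηn, cyc(A) ≤ αn³, and cyc(A,A,C) ≤ αn³, there exist disjoint subsets C⁺ and C⁻ of C such that e⁻(A,C⁺) ≤ ξn², e⁺(A,C⁻) ≤ ξn², and |C⁺|, |C⁻| ≥ |C|/2 + (|A|-|B|)/2 - ξn. -/

import Mathlib

open Finset
open scoped Classical

/-- An oriented graph: no loops and no pair of antiparallel edges. -/
def IsOriented {n : ℕ} (G : Fin n → Fin n → Prop) : Prop :=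
  (∀ v, ¬ G v v) ∧ ∀ u v : Fin n, G u v → ¬ G v u

/-- `d⁺(v, A)`: number of out-neighbors of `v` in `A`. -/
noncomputable def outDegOn {n : ℕ} (G : Fin n → Fin n → Prop) (v : Fin n)
    (A : Finset (Fin n)) : ℕ :=
  (A.filter fun u => G v u).card

/-- `d⁻(v, A)`: number of in-neighbors of `v` in `A`. -/
noncomputable def inDegOn {n : ℕ} (G : Fin n → Fin n → Prop) (v : Fin n)
    (A : Finset (Fin n)) : ℕ :=
  (A.filter fun u => G u v).card

/-- outdegree `d⁺(v)`. -/
noncomputable def outDeg {n : ℕ} (G : Fin n → Fin n → Prop) (v : Fin n) : ℕ :=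
  outDegOn G v univ

/-- indegree `d⁻(v)`. -/
noncomputable def inDeg {n : ℕ} (G : Fin n → Fin n → Prop) (v : Fin n) : ℕ :=
  inDegOn G v univ

/-- The minimum semidegree condition `δ⁰(G) ≥ b`. -/
def MinSemidegreeGE {n : ℕ} (G : Fin n → Fin n → Prop) (b : ℝ) : Prop :=
  ∀ v : Fin n, b ≤ (outDeg G v : ℝ) ∧ b ≤ (inDeg G v : ℝ)

/-- `e⁺(A, B)`: number of edges directed from `A` to `B`. -/
noncomputable def eOut {n : ℕ} (G : Fin n → Fin n → Prop) (A B : Finset (Fin n)) : ℕ :=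
  ∑ a ∈ A, outDegOn G a B

/-- `s` is the vertex set of a cyclic triangle. -/
def IsCycTri {n : ℕ} (G : Fin n → Fin n → Prop) (s : Finset (Fin n)) : Prop :=
  ∃ a b c : Fin n, G a b ∧ G b c ∧ G c a ∧ s = {a, b, c}

/-- `s` is the vertex set of a transitive triangle. -/
def IsTrnTri {n : ℕ} (G : Fin n → Fin n → Prop) (s : Finset (Fin n)) : Prop :=
  ∃ a b c : Fin n, G a b ∧ G b c ∧ G a c ∧ s = {a, b, c}

/-- `cyc(A)`: number of cyclic triangles with all vertices in `A`. -/
noncomputable def cycIn {n : ℕ} (G : Fin n → Fin n → Prop) (A : Finset (Fin n)) : ℕ :=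
  ((A.powersetCard 3).filter fun s => IsCycTri G s).card

/-- `trn(A)`: number of transitive triangles with all vertices in `A`. -/
noncomputable def trnIn {n : ℕ} (G : Fin n → Fin n → Prop) (A : Finset (Fin n)) : ℕ :=
  ((A.powersetCard 3).filter fun s => IsTrnTri G s).card

/-- `cyc(A, B, C)`: number of cyclic triangles with one vertex in each of `A`, `B`, `C`
(in the sense of some labeling of its vertex set). -/
noncomputable def cyc3 {n : ℕ} (G : Fin n → Fin n → Prop) (A B C : Finset (Fin n)) : ℕ :=
  (((univ : Finset (Fin n)).powersetCard 3).filter fun s =>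
    IsCycTri G s ∧ ∃ x ∈ A, ∃ y ∈ B, ∃ z ∈ C, s = ({x, y, z} : Finset (Fin n))).card

/-- A cyclic triangle tiling: a collection of vertex-disjoint cyclic triangles. -/
def IsCycTiling {n : ℕ} (G : Fin n → Fin n → Prop) (C : Finset (Finset (Fin n))) : Prop :=
  (∀ s ∈ C, IsCycTri G s) ∧ ∀ s ∈ C, ∀ t ∈ C, s ≠ t → Disjoint s t

/-- A cyclic triangle factor: a tiling covering every vertex. -/
def IsCycFactor {n : ℕ} (G : Fin n → Fin n → Prop) (C : Finset (Finset (Fin n))) : Prop :=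
  IsCycTiling G C ∧ C.biUnion id = univ

/-- `W` can be perfectly covered by vertex-disjoint cyclic triangles
(i.e. `H(G)[W]` has a perfect matching). -/
def HasCycPM {n : ℕ} (G : Fin n → Fin n → Prop) (W : Finset (Fin n)) : Prop :=
  ∃ C : Finset (Finset (Fin n)), IsCycTiling G C ∧ C.biUnion id = W

/-- The number of `(H(G), x, y)`-linking `(3ℓ-1)`-sets. -/
noncomputable def linkCount {n : ℕ} (G : Fin n → Fin n → Prop) (ℓ : ℕ) (x y : Fin n) : ℕ :=
  (((univ : Finset (Fin n)).powersetCard (3 * ℓ - 1)).filter fun S =>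
    x ∉ S ∧ y ∉ S ∧ HasCycPM G (insert x S) ∧ HasCycPM G (insert y S)).card

/-!
Let `Cm` and `Cp` be the vertices of `C` with at most `ξn/2` in-, respectively out-neighbours in
`A`. They are disjoint because every vertex outside `A` is adjacent to all but `2cn` vertices of
`A`, and the edge bounds are immediate. Reversing all edges swaps `Cm` and `Cp`, so it remains to
bound `#Cm`.

Since `A` spans few cyclic triangles, at least `ξn/16` vertices `S ⊆ A` have in-degree at most
`ξn/8` inside `A`: otherwise, repeatedly deleting a vertex of minimum in-degree `δ` destroys
`≳ δ²` cyclic triangles each time. A vertex `a ∈ S` is then an in-neighbour of almost all of `A`,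
so every `z ∈ C` with many in-neighbours in `A` and many out-neighbours in `S` lies on many cyclic
triangles `z → a → y → z` with `a ∈ S`, `y ∈ A`; as `cyc(A, A, C)` is small there are few such
`z`. Finally each `a ∈ S` has at least `(1/2 - c)n - ξn/8 - #B` in-neighbours in `C`, and double
counting the edges from `C` into `S` gives `#Cm ≥ n/2 - #B - ξn`.
-/
noncomputable def nonAdjOn {n : ℕ} (G : Fin n → Fin n → Prop) (v : Fin n)
    (F : Finset (Fin n)) : ℕ :=
  #(F.filter fun x => x ≠ v ∧ ¬ G v x ∧ ¬ G x v)

section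

variable {n : ℕ} {G : Fin n → Fin n → Prop}

theorem IsOriented.flip (hG : IsOriented G) : IsOriented (flip G) :=
  ⟨hG.1, fun u v h h' => hG.2 v u h h'⟩

theorem MinSemidegreeGE.flip {b : ℝ} (h : MinSemidegreeGE G b) : MinSemidegreeGE (flip G) b :=
  fun v => (h v).symm

theorem isCycTri_flip (s : Finset (Fin n)) : IsCycTri (flip G) s ↔ IsCycTri G s := by
  constructor <;>
  · rintro ⟨a, b, c, hab, hbc, hca, rfl⟩
    exact ⟨a, c, b, hca, hbc, hab, by grind⟩

theorem cycIn_flip (A : Finset (Fin n)) : cycIn (flip G) A = cycIn G A := by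
  simp only [cycIn, isCycTri_flip]

theorem cyc3_flip (A B C : Finset (Fin n)) : cyc3 (flip G) A B C = cyc3 G A B C := by
  simp only [cyc3, isCycTri_flip]

theorem eOut_eq_sum_inDegOn (X Y : Finset (Fin n)) : eOut G X Y = ∑ y ∈ Y, inDegOn G y X := by
  simp only [eOut, outDegOn, inDegOn, card_filter]
  exact sum_comm

theorem eOut_flip (X Y : Finset (Fin n)) : eOut (flip G) Y X = eOut G X Y :=
  (eOut_eq_sum_inDegOn X Y).symm

theorem eOut_eq_card_filter_product (X Y : Finset (Fin n)) :
    eOut G X Y = #((X ×ˢ Y).filter fun q => G q.1 q.2) := by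
  rw [card_filter, sum_product]
  simp only [eOut, outDegOn, card_filter]

theorem eOut_mono_left {X X' : Finset (Fin n)} (h : X ⊆ X') (Y : Finset (Fin n)) :
    eOut G X Y ≤ eOut G X' Y :=
  sum_le_sum_of_subset h

theorem eOut_le_card_mul {X Y : Finset (Fin n)} {d : ℝ} (h : ∀ x ∈ X, (outDegOn G x Y : ℝ) ≤ d) :
    (eOut G X Y : ℝ) ≤ #X * d := by
  simpa [eOut] using sum_le_card_nsmul X _ d h

theorem nonAdjOn_mono (v : Fin n) {F F' : Finset (Fin n)} (h : F ⊆ F') :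
    nonAdjOn G v F ≤ nonAdjOn G v F' :=
  card_le_card (filter_subset_filter _ h)

theorem inDegOn_mono (v : Fin n) {F F' : Finset (Fin n)} (h : F ⊆ F') :
    inDegOn G v F ≤ inDegOn G v F' :=
  card_le_card (filter_subset_filter _ h)

theorem inDegOn_le_inDegOn_erase_add_one (v u : Fin n) (W : Finset (Fin n)) :
    inDegOn G v W ≤ inDegOn G v (W.erase u) + 1 := by
  simp only [inDegOn, filter_erase]
  have := pred_card_le_card_erase (s := W.filter fun x => G x v) (a := u)
  omega

theorem inDegOn_union {X Y : Finset (Fin n)} (h : Disjoint X Y) (v : Fin n) :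
    inDegOn G v (X ∪ Y) = inDegOn G v X + inDegOn G v Y := by
  simp only [inDegOn, filter_union]
  exact card_union_of_disjoint (disjoint_filter_filter h)

theorem IsOriented.sum_out_add_sum_in_add_sum_nonAdj (hG : IsOriented G) (v : Fin n)
    (F : Finset (Fin n)) {M : Type*} [AddCommMonoid M] (f : Fin n → M) :
    ∑ x ∈ F.filter (G v ·), f x + ∑ x ∈ F.filter (G · v), f x
      + ∑ x ∈ F.filter (fun x => x ≠ v ∧ ¬ G v x ∧ ¬ G x v), f x
      + (if v ∈ F then f v else 0) = ∑ x ∈ F, f x := by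
  rw [← sum_ite_eq' F v f]
  simp only [sum_filter, ← sum_add_distrib]
  refine sum_congr rfl fun x _ => ?_
  by_cases hxv : x = v
  · subst hxv
    simp [hG.1]
  · by_cases h1 : G v x <;> by_cases h2 : G x v
    · exact absurd h2 (hG.2 v x h1)
    all_goals simp [h1, h2, hxv]

theorem IsOriented.outDegOn_add_inDegOn_add_nonAdjOn (hG : IsOriented G) (v : Fin n)
    (F : Finset (Fin n)) :
    outDegOn G v F + inDegOn G v F + nonAdjOn G v F + (if v ∈ F then 1 else 0) = #F := by
  have := hG.sum_out_add_sum_in_add_sum_nonAdj v F (fun _ => 1)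
  simp only [← card_eq_sum_ones] at this
  simpa only [outDegOn, inDegOn, nonAdjOn] using this

theorem IsOriented.ne (hG : IsOriented G) {x y : Fin n} (h : G x y) : x ≠ y := by
  rintro rfl
  exact hG.1 x h

theorem IsOriented.nonAdjOn_le (hG : IsOriented G) {c : ℝ}
    (h : MinSemidegreeGE G ((1/2 - c) * n)) (v : Fin n) (F : Finset (Fin n)) :
    (nonAdjOn G v F : ℝ) ≤ 2 * c * n := by
  have hsum := hG.outDegOn_add_inDegOn_add_nonAdjOn v univ
  simp only [mem_univ, if_true, card_univ, Fintype.card_fin] at hsum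
  have hsum' : (outDegOn G v univ : ℝ) + inDegOn G v univ + nonAdjOn G v univ + 1 = n := by
    exact_mod_cast hsum
  have hmono : (nonAdjOn G v F : ℝ) ≤ nonAdjOn G v univ := by
    exact_mod_cast nonAdjOn_mono v (subset_univ F)
  have := h v
  simp only [outDeg, inDeg] at this
  linarith [this.1, this.2]

theorem IsOriented.two_mul_eOut_self_add_card_le (hG : IsOriented G) (I : Finset (Fin n)) :
    2 * eOut G I I + #I ≤ #I * #I := by
  have hdeg : ∀ u ∈ I, outDegOn G u I + inDegOn G u I + 1 ≤ #I := fun u hu => by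
    have := hG.outDegOn_add_inDegOn_add_nonAdjOn u I
    simp only [hu, if_true] at this
    omega
  calc 2 * eOut G I I + #I = ∑ u ∈ I, (outDegOn G u I + inDegOn G u I + 1) := by
        rw [sum_add_distrib, sum_add_distrib, ← eOut_eq_sum_inDegOn, ← card_eq_sum_ones]
        simp only [eOut]
        ring
    _ ≤ ∑ _u ∈ I, #I := sum_le_sum hdeg
    _ = #I * #I := by rw [sum_const, smul_eq_mul]

theorem IsOriented.card_triple (hG : IsOriented G) {x y z : Fin n} (hxy : G x y) (hyz : G y z)
    (hzx : G z x) : #({x, y, z} : Finset (Fin n)) = 3 :=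
  card_eq_three.2 ⟨x, y, z, hG.ne hxy, (hG.ne hzx).symm, hG.ne hyz, rfl⟩

/-- An edge `x → y` with `v → x` and `y → v` closes the cyclic triangle `{v, x, y}`, which
determines `(x, y)`. -/
theorem IsOriented.eOut_le_card_of_triangle_mem (hG : IsOriented G) (v : Fin n)
    (X Y : Finset (Fin n)) (T : Finset (Finset (Fin n)))
    (hT : ∀ x ∈ X, ∀ y ∈ Y, G v x → G x y → G y v → ({v, x, y} : Finset (Fin n)) ∈ T) :
    eOut G (X.filter (G v ·)) (Y.filter (G · v)) ≤ #T := by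
  rw [eOut_eq_card_filter_product]
  refine card_le_card_of_injOn (fun q => {v, q.1, q.2}) ?_ ?_
  · rintro ⟨x, y⟩ hq
    simp only [coe_filter, mem_product, mem_filter, Set.mem_ofPred_eq] at hq
    exact hT x hq.1.1.1 y hq.1.2.1 hq.1.1.2 hq.2 hq.1.2.2
  · rintro ⟨x, y⟩ hq ⟨x', y'⟩ hq' heq
    simp only [coe_filter, mem_product, mem_filter, Set.mem_ofPred_eq] at hq hq' heq
    have hx' : x' ∈ ({v, x, y} : Finset (Fin n)) := heq ▸ by simp
    have hy' : y' ∈ ({v, x, y} : Finset (Fin n)) := heq ▸ by simp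
    simp only [mem_insert, mem_singleton] at hx' hy'
    have := hG.2
    have := hG.ne hq'.1.1.2
    have := hG.ne hq'.1.2.2
    grind

theorem IsOriented.cycIn_erase_add_eOut_le (hG : IsOriented G) {v : Fin n} {W : Finset (Fin n)}
    (hv : v ∈ W) :
    cycIn G (W.erase v) + eOut G (W.filter (G v ·)) (W.filter (G · v)) ≤ cycIn G W := by
  set T := (W.powersetCard 3).filter (IsCycTri G)
  have herase : cycIn G (W.erase v) = #(T.filter (v ∉ ·)) := by
    simp only [cycIn, T, filter_filter]
    congr 1
    ext s
    simp only [mem_filter, mem_powersetCard, subset_erase]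
    tauto
  have hthrough : eOut G (W.filter (G v ·)) (W.filter (G · v)) ≤ #(T.filter (v ∈ ·)) :=
    hG.eOut_le_card_of_triangle_mem v W W _ fun x hx y hy hvx hxy hyv => by
      simp only [T, mem_filter, mem_powersetCard, mem_insert_self, and_true]
      refine ⟨⟨?_, hG.card_triple hvx hxy hyv⟩, v, x, y, hvx, hxy, hyv, rfl⟩
      simp [insert_subset_iff, hv, hx, hy]
  have hsplit := card_filter_add_card_filter_not (s := T) (v ∈ ·)
  rw [herase, show cycIn G W = #T from rfl]
  omega

theorem IsOriented.sum_eOut_le_cyc3 (hG : IsOriented G) {A C : Finset (Fin n)}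
    (hAC : Disjoint A C) :
    ∑ z ∈ C, eOut G (A.filter (G z ·)) (A.filter (G · z)) ≤ cyc3 G A A C := by
  set T := ((univ : Finset (Fin n)).powersetCard 3).filter fun s =>
    IsCycTri G s ∧ ∃ x ∈ A, ∃ y ∈ A, ∃ z ∈ C, s = ({x, y, z} : Finset (Fin n))
  have hthrough : ∀ z ∈ C, eOut G (A.filter (G z ·)) (A.filter (G · z)) ≤ #(T.filter (z ∈ ·)) :=
    fun z hz => hG.eOut_le_card_of_triangle_mem z A A _ fun x hx y hy hzx hxy hyz => by
      simp only [T, mem_filter, mem_powersetCard, subset_univ, true_and, mem_insert_self, and_true]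
      refine ⟨hG.card_triple hzx hxy hyz, ⟨z, x, y, hzx, hxy, hyz, rfl⟩, x, hx, y, hy, z, hz, ?_⟩
      grind
  -- a triangle counted by `cyc3 G A A C` has a single vertex in `C`
  have hsingle : ∀ s ∈ T, #(C.filter (· ∈ s)) ≤ 1 := by
    intro s hs
    obtain ⟨x, hx, y, hy, w, -, rfl⟩ := (mem_filter.1 hs).2.2
    refine card_le_one.2 fun a ha b hb => ?_
    simp only [mem_filter, mem_insert, mem_singleton] at ha hb
    have := disjoint_left.1 hAC hx
    have := disjoint_left.1 hAC hy
    grind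
  calc ∑ z ∈ C, eOut G (A.filter (G z ·)) (A.filter (G · z))
      ≤ ∑ z ∈ C, #(T.filter (z ∈ ·)) := sum_le_sum hthrough
    _ = ∑ s ∈ T, #(C.filter (· ∈ s)) := by simp only [card_filter]; exact sum_comm
    _ ≤ ∑ _s ∈ T, 1 := sum_le_sum hsingle
    _ = cyc3 G A A C := (card_eq_sum_ones T).symm

/-- At a vertex `v` of minimum in-degree `t`, the in-neighbourhood `I` of `v` receives at least
`t²` edges; at most `t²/2` come from `I` itself and at most `pt` from non-neighbours of `v`, so
the rest come from the out-neighbourhood of `v`. -/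
theorem IsOriented.exists_sq_le_four_mul_eOut (hG : IsOriented G) {W : Finset (Fin n)}
    (hW : W.Nonempty) {δ p : ℝ} (h4p : 4 * p ≤ δ) (hδ : ∀ v ∈ W, δ ≤ inDegOn G v W)
    (hp : ∀ v ∈ W, (nonAdjOn G v W : ℝ) ≤ p) :
    ∃ v ∈ W, δ ^ 2 ≤ 4 * eOut G (W.filter (G v ·)) (W.filter (G · v)) := by
  obtain ⟨v, hv, hmin⟩ := exists_min_image W (inDegOn G · W) hW
  refine ⟨v, hv, ?_⟩
  set I := W.filter (G · v)
  set O := W.filter (G v ·)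
  set R := W.filter fun x => x ≠ v ∧ ¬ G v x ∧ ¬ G x v
  have hlow : #I * #I ≤ eOut G W I := by
    rw [eOut_eq_sum_inDegOn]
    calc #I * #I = ∑ _u ∈ I, #I := by rw [sum_const, smul_eq_mul]
      _ ≤ _ := sum_le_sum fun u hu => hmin u (filter_subset _ _ hu)
  have hsplit : eOut G O I + eOut G I I + ∑ x ∈ R, outDegOn G x I = eOut G W I := by
    have hvI : outDegOn G v I = 0 :=
      card_eq_zero.2 (filter_eq_empty_iff.2 fun u hu => hG.2 u v (mem_filter.1 hu).2)
    have := hG.sum_out_add_sum_in_add_sum_nonAdj v W (outDegOn G · I)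
    simp only [hv, if_true, hvI, add_zero] at this
    exact this
  have hR : ∑ x ∈ R, outDegOn G x I ≤ nonAdjOn G v W * #I := by
    rw [nonAdjOn, ← smul_eq_mul, ← sum_const]
    exact sum_le_sum fun x _ => card_filter_le _ _
  have hII := hG.two_mul_eOut_self_add_card_le I
  have hδt : δ ≤ #I := hδ v hv
  have hq : (nonAdjOn G v W : ℝ) ≤ p := hp v hv
  have hδ0 : 0 ≤ δ := by linarith [(Nat.cast_nonneg _ : (0 : ℝ) ≤ nonAdjOn G v W)]
  have hlow' : (#I : ℝ) * #I ≤ eOut G O I + eOut G I I + nonAdjOn G v W * #I := by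
    have : #I * #I ≤ eOut G O I + eOut G I I + nonAdjOn G v W * #I := by omega
    exact_mod_cast this
  have hII' : 2 * (eOut G I I : ℝ) + #I ≤ #I * #I := by exact_mod_cast hII
  have hqt : (nonAdjOn G v W : ℝ) * #I ≤ (#I : ℝ) * #I / 4 := by
    nlinarith [(Nat.cast_nonneg _ : (0 : ℝ) ≤ #I)]
  nlinarith [pow_le_pow_left₀ hδ0 hδt 2]

theorem IsOriented.mul_sq_le_four_mul_cycIn (hG : IsOriented G) {δ p : ℝ} (h4p : 4 * p ≤ δ) :
    ∀ (m : ℕ) (W : Finset (Fin n)), W.Nonempty → (∀ v ∈ W, δ + m ≤ inDegOn G v W) →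
      (∀ v ∈ W, (nonAdjOn G v W : ℝ) ≤ p) → m * δ ^ 2 ≤ 4 * cycIn G W := by
  intro m
  induction m with
  | zero => intros; simp
  | succ m ih =>
    intro W hW hδ hp
    push_cast at hδ
    have hδ0 : 0 ≤ δ := by
      obtain ⟨v, hv⟩ := hW
      linarith [hp v hv, (Nat.cast_nonneg _ : (0 : ℝ) ≤ nonAdjOn G v W)]
    obtain ⟨v, hv, hstep⟩ := hG.exists_sq_le_four_mul_eOut hW h4p
      (fun u hu => by linarith [hδ u hu, (Nat.cast_nonneg _ : (0 : ℝ) ≤ m)]) hp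
    have hne : (W.erase v).Nonempty := by
      have hpos : (0 : ℝ) < inDegOn G v W := by
        linarith [hδ v hv, (Nat.cast_nonneg _ : (0 : ℝ) ≤ m)]
      obtain ⟨u, hu⟩ := card_pos.1 (by exact_mod_cast hpos : 0 < inDegOn G v W)
      exact ⟨u, mem_erase.2 ⟨hG.ne (mem_filter.1 hu).2, (mem_filter.1 hu).1⟩⟩
    have hdeg : ∀ u ∈ W.erase v, δ + m ≤ inDegOn G u (W.erase v) := fun u hu => by
      have h1 := hδ u (mem_of_mem_erase hu)
      have h2 : (inDegOn G u W : ℝ) ≤ inDegOn G u (W.erase v) + 1 := by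
        exact_mod_cast inDegOn_le_inDegOn_erase_add_one u v W
      linarith
    have hp' : ∀ u ∈ W.erase v, (nonAdjOn G u (W.erase v) : ℝ) ≤ p := fun u hu =>
      (Nat.cast_le.2 (nonAdjOn_mono u (erase_subset v W))).trans (hp u (mem_of_mem_erase hu))
    have hcyc : (cycIn G (W.erase v) : ℝ) + eOut G (W.filter (G v ·)) (W.filter (G · v))
        ≤ cycIn G W := by
      exact_mod_cast hG.cycIn_erase_add_eOut_le hv
    have := ih (W.erase v) hne hdeg hp'
    push_cast
    linarith

/-- If few vertices have small in-degree inside `A`, deleting them leaves a set of large minimum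
in-degree, hence with many cyclic triangles. -/
theorem IsOriented.le_card_filter_inDegOn_le (hG : IsOriented G) {A : Finset (Fin n)} {x p : ℝ}
    (hp : ∀ v ∈ A, (nonAdjOn G v A : ℝ) ≤ p) (h16p : 16 * p ≤ x) (hA : x / 2 ≤ #A)
    (hcyc : 4 * (cycIn G A : ℝ) < (x / 4 - 1) * (x / 4) ^ 2) :
    x / 2 ≤ #(A.filter fun a => (inDegOn G a A : ℝ) ≤ x) := by
  set S := A.filter fun a => (inDegOn G a A : ℝ) ≤ x
  by_contra! hS
  have hSA : S ⊆ A := filter_subset _ _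
  have hx : 0 ≤ x := by nlinarith [(Nat.cast_nonneg _ : (0 : ℝ) ≤ cycIn G A), sq_nonneg (x / 4)]
  have hW : (A \ S).Nonempty := by
    rw [← card_pos, card_sdiff_of_subset hSA]
    have : #S < #A := by exact_mod_cast hS.trans_le hA
    omega
  have hfloor : (⌊x / 4⌋₊ : ℝ) ≤ x / 4 := Nat.floor_le (by linarith)
  have hdeg : ∀ v ∈ A \ S, x / 4 + ⌊x / 4⌋₊ ≤ inDegOn G v (A \ S) := by
    intro v hv
    obtain ⟨hvA, hvS⟩ := mem_sdiff.1 hv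
    have hlarge : x < inDegOn G v A := by
      by_contra! h
      exact hvS (mem_filter.2 ⟨hvA, h⟩)
    have hsplit : inDegOn G v A ≤ inDegOn G v (A \ S) + #S := by
      rw [← sdiff_union_of_subset hSA, inDegOn_union sdiff_disjoint, sdiff_union_of_subset hSA]
      have : inDegOn G v S ≤ #S := card_filter_le _ _
      omega
    have : (inDegOn G v A : ℝ) ≤ inDegOn G v (A \ S) + #S := by exact_mod_cast hsplit
    linarith
  have hmain := hG.mul_sq_le_four_mul_cycIn (δ := x / 4) (by linarith) ⌊x / 4⌋₊ (A \ S) hW hdeg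
    fun v hv => (Nat.cast_le.2 (nonAdjOn_mono v sdiff_subset)).trans (hp v (mem_sdiff.1 hv).1)
  have hmono : (cycIn G (A \ S) : ℝ) ≤ cycIn G A := by
    exact_mod_cast card_le_card (filter_subset_filter _ (powersetCard_mono sdiff_subset))
  have hfloor' : x / 4 - 1 ≤ ⌊x / 4⌋₊ := by linarith [Nat.lt_floor_add_one (x / 4)]
  nlinarith [sq_nonneg (x / 4)]

theorem IsOriented.card_mul_le_eOut (hG : IsOriented G) {S F A : Finset (Fin n)} (hFA : F ⊆ A)
    {y p : ℝ} (hS : ∀ a ∈ S, (inDegOn G a A : ℝ) ≤ y ∧ (nonAdjOn G a A : ℝ) ≤ p) :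
    #S * (#F - y - p - 1) ≤ (eOut G S F : ℝ) := by
  have hout : ∀ a ∈ S, (#F : ℝ) - y - p - 1 ≤ outDegOn G a F := fun a ha => by
    have hsum := hG.outDegOn_add_inDegOn_add_nonAdjOn a F
    have hin := inDegOn_mono (G := G) a hFA
    have hnon := nonAdjOn_mono (G := G) a hFA
    have hite : (if a ∈ F then 1 else 0) ≤ 1 := by split_ifs <;> omega
    have : #F ≤ outDegOn G a F + inDegOn G a A + nonAdjOn G a A + 1 := by omega
    have : (#F : ℝ) ≤ outDegOn G a F + inDegOn G a A + nonAdjOn G a A + 1 := by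
      exact_mod_cast this
    linarith [hS a ha]
  simpa [eOut] using card_nsmul_le_sum S _ _ hout

/-- Each `a ∈ S` sends edges to almost all in-neighbours of `z` in `A`, so a vertex `z` with
many out-neighbours in `S` and many in-neighbours in `A` lies on many cyclic triangles. -/
theorem IsOriented.card_mul_le_cyc3 (hG : IsOriented G) {A C S : Finset (Fin n)}
    (hAC : Disjoint A C) (hSA : S ⊆ A) {y p d k : ℝ}
    (hS : ∀ a ∈ S, (inDegOn G a A : ℝ) ≤ y ∧ (nonAdjOn G a A : ℝ) ≤ p) (hd : y + p + 1 ≤ d) :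
    #(C.filter fun z => d < inDegOn G z A ∧ k < outDegOn G z S) * (k * (d - y - p - 1))
      ≤ (cyc3 G A A C : ℝ) := by
  set X := C.filter fun z => d < inDegOn G z A ∧ k < outDegOn G z S
  have hz : ∀ z ∈ X, k * (d - y - p - 1) ≤ (eOut G (S.filter (G z ·)) (A.filter (G · z)) : ℝ) :=
    fun z hz => by
      obtain ⟨-, hin, hout⟩ := mem_filter.1 hz
      have := hG.card_mul_le_eOut (S := S.filter (G z ·)) (F := A.filter (G · z))
        (filter_subset _ _) fun a ha => hS a (mem_filter.1 ha).1
      have hout' : k < #(S.filter (G z ·)) := hout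
      have hin' : d < #(A.filter (G · z)) := hin
      nlinarith [(Nat.cast_nonneg _ : (0 : ℝ) ≤ #(S.filter (G z ·)))]
  have hsum : ∑ z ∈ X, eOut G (S.filter (G z ·)) (A.filter (G · z))
      ≤ ∑ z ∈ C, eOut G (A.filter (G z ·)) (A.filter (G · z)) :=
    (sum_le_sum fun z _ => eOut_mono_left (filter_subset_filter _ hSA) _).trans
      (sum_le_sum_of_subset (filter_subset _ _))
  calc (#X : ℝ) * (k * (d - y - p - 1))
      ≤ ∑ z ∈ X, (eOut G (S.filter (G z ·)) (A.filter (G · z)) : ℝ) := by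
        simpa using card_nsmul_le_sum X _ _ hz
    _ ≤ cyc3 G A A C := by exact_mod_cast hsum.trans (hG.sum_eOut_le_cyc3 hAC)

/-- Double counting the edges from `C` into `S`: each vertex of `S` receives at least
`b - y - #B` of them, while outside the `r` exceptional vertices only the vertices with few
in-neighbours in `A` send more than `k * #S`. -/
theorem MinSemidegreeGE.sub_le_card_filter_inDegOn_le {b : ℝ} (hsd : MinSemidegreeGE G b)
    {A B C S : Finset (Fin n)} (hAB : Disjoint A B) (hAC : Disjoint A C) (hBC : Disjoint B C)
    (hABC : A ∪ B ∪ C = univ) (hS : S.Nonempty) {y d k r : ℝ} (hk : 0 ≤ k)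
    (hSy : ∀ a ∈ S, (inDegOn G a A : ℝ) ≤ y)
    (hX : #(C.filter fun z => d < inDegOn G z A ∧ k * #S < outDegOn G z S) ≤ r) :
    b - y - #B - r - k * n ≤ #(C.filter fun z => (inDegOn G z A : ℝ) ≤ d) := by
  set Cm := C.filter fun z => (inDegOn G z A : ℝ) ≤ d
  set X := C.filter fun z => d < inDegOn G z A ∧ k * #S < outDegOn G z S
  have hS0 : (0 : ℝ) < #S := by exact_mod_cast hS.card_pos
  have hin : ∀ a ∈ S, b - y - #B ≤ (inDegOn G a C : ℝ) := fun a ha => by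
    have hsplit : inDeg G a = inDegOn G a A + inDegOn G a B + inDegOn G a C := by
      rw [inDeg, ← hABC, inDegOn_union (disjoint_union_left.2 ⟨hAC, hBC⟩), inDegOn_union hAB]
    have hB : inDegOn G a B ≤ #B := card_filter_le _ _
    have hsplit' : (inDeg G a : ℝ) = inDegOn G a A + inDegOn G a B + inDegOn G a C := by
      exact_mod_cast hsplit
    have hB' : (inDegOn G a B : ℝ) ≤ #B := by exact_mod_cast hB
    linarith [(hsd a).2, hSy a ha]
  have hlow : #S * (b - y - #B) ≤ (eOut G C S : ℝ) := by
    rw [eOut_eq_sum_inDegOn]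
    simpa using card_nsmul_le_sum S _ _ hin
  have hmany : ∑ z ∈ C.filter (· ∈ Cm ∪ X), (outDegOn G z S : ℝ) ≤ (#Cm + r) * #S := by
    calc ∑ z ∈ C.filter (· ∈ Cm ∪ X), (outDegOn G z S : ℝ)
        ≤ #(C.filter (· ∈ Cm ∪ X)) * #S := by
          refine (sum_le_card_nsmul _ _ _ fun z _ => ?_).trans_eq (nsmul_eq_mul _ _)
          exact_mod_cast card_filter_le S _
      _ ≤ (#Cm + r) * #S := by
          gcongr
          calc (#(C.filter (· ∈ Cm ∪ X)) : ℝ) ≤ #(Cm ∪ X) := by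
                exact_mod_cast card_le_card (fun z hz => (mem_filter.1 hz).2)
            _ ≤ #Cm + #X := by exact_mod_cast card_union_le Cm X
            _ ≤ #Cm + r := by linarith
  have hfew : ∑ z ∈ C.filter (· ∉ Cm ∪ X), (outDegOn G z S : ℝ) ≤ n * (k * #S) := by
    calc ∑ z ∈ C.filter (· ∉ Cm ∪ X), (outDegOn G z S : ℝ)
        ≤ #(C.filter (· ∉ Cm ∪ X)) * (k * #S) := by
          refine (sum_le_card_nsmul _ _ _ fun z hz => ?_).trans_eq (nsmul_eq_mul _ _)
          obtain ⟨hzC, hz⟩ := mem_filter.1 hz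
          simp only [mem_union, Cm, X, mem_filter, hzC, true_and, not_or, not_and, not_le] at hz
          exact not_lt.1 (hz.2 hz.1)
      _ ≤ n * (k * #S) := by
          gcongr
          simpa using card_le_univ (C.filter (· ∉ Cm ∪ X))
  have hup : (eOut G C S : ℝ) ≤ #S * (#Cm + r + k * n) := by
    rw [eOut, ← sum_filter_add_sum_filter_not C (· ∈ Cm ∪ X)]
    push_cast
    linarith
  have := le_of_mul_le_mul_left (hlow.trans hup) hS0
  linarith

theorem eOut_filter_outDegOn_le {A C : Finset (Fin n)} {d : ℝ} (hd : 0 ≤ d) :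
    (eOut G (C.filter fun z => (outDegOn G z A : ℝ) ≤ d) A : ℝ) ≤ n * d := by
  refine (eOut_le_card_mul fun z hz => (mem_filter.1 hz).2).trans ?_
  gcongr
  simpa using card_le_univ (C.filter fun z => (outDegOn G z A : ℝ) ≤ d)

theorem IsOriented.disjoint_filter_outDegOn_le_filter_inDegOn_le (hG : IsOriented G)
    {A C : Finset (Fin n)} (hAC : Disjoint A C) {d q : ℝ}
    (hq : ∀ z ∈ C, (nonAdjOn G z A : ℝ) ≤ q) (hA : 2 * d + q < #A) :
    Disjoint (C.filter fun z => (outDegOn G z A : ℝ) ≤ d)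
      (C.filter fun z => (inDegOn G z A : ℝ) ≤ d) := by
  refine disjoint_filter.2 fun z hz hout hin => ?_
  have hsum := hG.outDegOn_add_inDegOn_add_nonAdjOn z A
  rw [if_neg (disjoint_right.1 hAC hz), add_zero] at hsum
  have : (outDegOn G z A : ℝ) + inDegOn G z A + nonAdjOn G z A = #A := by exact_mod_cast hsum
  linarith [hq z hz]

theorem IsOriented.half_sub_le_card_filter_inDegOn_le (hG : IsOriented G) {c ξ α : ℝ}
    (hsd : MinSemidegreeGE G ((1/2 - c) * n)) (hξ : 0 < ξ) (hξ1 : ξ ≤ 1) (hξn : 64 ≤ ξ * n)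
    (hc : c ≤ ξ / 512) (hα : α ≤ ξ ^ 4 / 2 ^ 20)
    {A B C : Finset (Fin n)} (hAB : Disjoint A B) (hAC : Disjoint A C) (hBC : Disjoint B C)
    (hABC : A ∪ B ∪ C = univ) (hA : ξ * n / 16 ≤ #A)
    (hcycA : (cycIn G A : ℝ) ≤ α * n ^ 3) (hcyc3 : (cyc3 G A A C : ℝ) ≤ α * n ^ 3) :
    n / 2 - #B - ξ * n ≤ #(C.filter fun z => (inDegOn G z A : ℝ) ≤ ξ * n / 2) := by
  have hξn0 : 0 < ξ * n := by linarith
  have hαn : α * n ^ 3 ≤ ξ * (ξ * n) ^ 3 / 2 ^ 20 := by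
    calc α * n ^ 3 ≤ ξ ^ 4 / 2 ^ 20 * n ^ 3 := by gcongr
      _ = ξ * (ξ * n) ^ 3 / 2 ^ 20 := by ring
  have hcn : 2 * c * n ≤ ξ * n / 256 := by nlinarith
  have hp : ∀ v ∈ A, (nonAdjOn G v A : ℝ) ≤ 2 * c * n := fun v _ => hG.nonAdjOn_le hsd v A
  set S := A.filter fun a => (inDegOn G a A : ℝ) ≤ ξ * n / 8
  have hS : ξ * n / 16 ≤ #S := by
    have hcyc : 4 * (cycIn G A : ℝ) < (ξ * n / 8 / 4 - 1) * (ξ * n / 8 / 4) ^ 2 := by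
      have h1 : ξ * n / 64 * (ξ * n / 32) ^ 2 ≤ (ξ * n / 8 / 4 - 1) * (ξ * n / 8 / 4) ^ 2 :=
        mul_le_mul (by linarith) (by ring_nf; rfl) (by positivity) (by linarith)
      have h2 : ξ * (ξ * n) ^ 3 ≤ (ξ * n) ^ 3 := by nlinarith [pow_pos hξn0 3]
      nlinarith [pow_pos hξn0 3]
    have := hG.le_card_filter_inDegOn_le (x := ξ * n / 8) hp (by linarith) (by linarith) hcyc
    linarith
  have hSy : ∀ a ∈ S, (inDegOn G a A : ℝ) ≤ ξ * n / 8 ∧ (nonAdjOn G a A : ℝ) ≤ 2 * c * n :=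
    fun a ha => ⟨(mem_filter.1 ha).2, hp a (filter_subset _ _ ha)⟩
  set X := C.filter fun z => ξ * n / 2 < inDegOn G z A ∧ ξ / 4 * #S < outDegOn G z S
  have hX : #X * (ξ / 4 * #S * (ξ * n / 2 - ξ * n / 8 - 2 * c * n - 1)) ≤ (cyc3 G A A C : ℝ) :=
    hG.card_mul_le_cyc3 hAC (filter_subset _ _) hSy (by linarith)
  have hXle : #X ≤ ξ * n / 8 := by
    by_contra! h
    have hκ : ξ * (ξ * n) ^ 2 / 256
        ≤ ξ / 4 * #S * (ξ * n / 2 - ξ * n / 8 - 2 * c * n - 1) := by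
      calc ξ * (ξ * n) ^ 2 / 256 = ξ / 4 * (ξ * n / 16) * (ξ * n / 4) := by ring
        _ ≤ _ := by gcongr; linarith
    have := mul_le_mul h.le hκ (by positivity) (Nat.cast_nonneg _)
    nlinarith [pow_pos hξn0 3]
  have hSne : S.Nonempty :=
    card_pos.1 (by exact_mod_cast (by positivity : 0 < ξ * n / 16).trans_le hS)
  have := hsd.sub_le_card_filter_inDegOn_le hAB hAC hBC hABC hSne (by positivity)
    (fun a ha => (hSy a ha).1) hXle
  nlinarith

end

theorem stmt_9 :
    ∀ η : ℝ, 0 < η → η < 1 →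
    ∃ ξ₀ > (0:ℝ), ∀ ξ : ℝ, 0 < ξ → ξ ≤ ξ₀ →
    ∃ ε > (0:ℝ), ∀ α c : ℝ, 0 < α → α ≤ ε → 0 < c → c ≤ ε →
    ∃ N : ℕ, ∀ n : ℕ, N ≤ n → ∀ G : Fin n → Fin n → Prop, IsOriented G →
      MinSemidegreeGE G ((1/2 - c) * n) →
      ∀ A B C : Finset (Fin n), Disjoint A B → Disjoint A C → Disjoint B C →
        A ∪ B ∪ C = univ → η * n ≤ (A.card : ℝ) →
        (cycIn G A : ℝ) ≤ α * n^3 → (cyc3 G A A C : ℝ) ≤ α * n^3 →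
        ∃ Cp Cm : Finset (Fin n), Cp ⊆ C ∧ Cm ⊆ C ∧ Disjoint Cp Cm ∧
          (eOut G Cp A : ℝ) ≤ ξ * n^2 ∧ (eOut G A Cm : ℝ) ≤ ξ * n^2 ∧
          (C.card : ℝ)/2 + ((A.card : ℝ) - (B.card : ℝ))/2 - ξ * n ≤ (Cp.card : ℝ) ∧
          (C.card : ℝ)/2 + ((A.card : ℝ) - (B.card : ℝ))/2 - ξ * n ≤ (Cm.card : ℝ) := by
  intro η hη hη1
  refine ⟨η / 4, by positivity, fun ξ hξ hξη => ⟨ξ ^ 4 / 2 ^ 20, by positivity,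
    fun α c _ hα _ hc => ⟨⌈64 / ξ⌉₊,
      fun n hn G hG hsd A B C hAB hAC hBC hABC hA hcycA hcyc3 => ?_⟩⟩⟩
  have hξ1 : ξ ≤ 1 := by linarith
  have hξn : 64 ≤ ξ * n := by
    have := (Nat.le_ceil (64 / ξ)).trans (Nat.cast_le.2 hn)
    rwa [div_le_iff₀ hξ, mul_comm] at this
  have hc' : c ≤ ξ / 512 := hc.trans (by nlinarith [pow_le_one₀ hξ.le hξ1 (n := 3)])
  have hA' : ξ * n / 16 ≤ #A := by nlinarith
  have hcard : (#A : ℝ) + #B + #C = n := by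
    have := card_union_of_disjoint (disjoint_union_left.2 ⟨hAC, hBC⟩)
    rw [hABC, card_union_of_disjoint hAB, card_univ, Fintype.card_fin] at this
    exact_mod_cast this.symm
  have hCm := hG.half_sub_le_card_filter_inDegOn_le hsd hξ hξ1 hξn hc' hα hAB hAC hBC hABC hA'
    hcycA hcyc3
  have hCp : (n : ℝ) / 2 - #B - ξ * n ≤ #(C.filter fun z => (outDegOn G z A : ℝ) ≤ ξ * n / 2) :=
    hG.flip.half_sub_le_card_filter_inDegOn_le hsd.flip hξ hξ1 hξn hc' hα hAB hAC hBC hABC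
    hA' (by rwa [cycIn_flip]) (by rwa [cyc3_flip])
  have hedges : n * (ξ * n / 2) ≤ ξ * n ^ 2 := by nlinarith
  refine ⟨_, _, filter_subset _ _, filter_subset _ _,
    hG.disjoint_filter_outDegOn_le_filter_inDegOn_le hAC (fun z _ => hG.nonAdjOn_le hsd z A)
      (by nlinarith), (eOut_filter_outDegOn_le (by positivity)).trans hedges, ?_,
    by linarith, by linarith⟩
  rw [← eOut_flip]
  exact (eOut_filter_outDegOn_le (G := flip G) (by positivity)).trans hedges
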